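/- arXiv:2211.06722 — 4 statements merged into one kernel-verified Lean document; each statement's English description precedes it below -/
import Mathlib

section
/- Let n_1 be a positive integer, let 0 < d_{1,2} ≤ d_{1,3} ≤ d_{2,3} ≤ 1 be reals with d_{1,2} > √(d_{1,2}·d_{1,3}·d_{2,3}), and let a_i, b_i ∈ [0,1] for i = 1,...,n_1 satisfy ∑ a_i ≤ d_{1,2}·n_1 and ∑ b_i ≤ d_{1,3}·n_1. Then ∑_{i=1}^{n_1} min(a_i·b_i, d_{2,3}) ≤ n_1·√(d_{1,2}·d_{1,3}·d_{2,3}) + 1. -/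
/-- The key optimization bound in the proof of the tripartite transversal-clique
bound: `∑ min(aᵢbᵢ, d₂₃) ≤ n₁·√(d₁₂d₁₃d₂₃) + 1`. -/
theorem sum_min_prod_le (n₁ : ℕ) (hn₁ : 0 < n₁)
    (d₁₂ d₁₃ d₂₃ : ℝ)
    (hd₁₂ : 0 < d₁₂) (h12le13 : d₁₂ ≤ d₁₃) (h13le23 : d₁₃ ≤ d₂₃) (hd₂₃ : d₂₃ ≤ 1)
    (hbig : d₁₂ > Real.sqrt (d₁₂ * d₁₃ * d₂₃))
    (a b : Fin n₁ → ℝ)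
    (ha : ∀ i, a i ∈ Set.Icc (0 : ℝ) 1) (hb : ∀ i, b i ∈ Set.Icc (0 : ℝ) 1)
    (hsa : ∑ i, a i ≤ d₁₂ * n₁) (hsb : ∑ i, b i ≤ d₁₃ * n₁) :
    ∑ i, min (a i * b i) d₂₃ ≤ n₁ * Real.sqrt (d₁₂ * d₁₃ * d₂₃) + 1 := by
  have hd13 : (0:ℝ) < d₁₃ := lt_of_lt_of_le hd₁₂ h12le13
  have hd23pos : (0:ℝ) < d₂₃ := lt_of_lt_of_le hd₁₂ (h12le13.trans h13le23)
  -- pointwise bound : min (a i * b i) d₂₃ ≤ √(a i) * √(b i) * √d₂₃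
  have hpt : ∀ i, min (a i * b i) d₂₃ ≤
      Real.sqrt (a i) * Real.sqrt (b i) * Real.sqrt d₂₃ := by
    intro i
    obtain ⟨ha0, ha1⟩ := ha i
    obtain ⟨hb0, hb1⟩ := hb i
    have : Real.sqrt (a i) * Real.sqrt (b i) * Real.sqrt d₂₃ =
        Real.sqrt (a i * b i * d₂₃) := by
      rw [Real.sqrt_mul (by positivity), Real.sqrt_mul ha0]
    rw [this]
    rcases le_total (a i * b i) d₂₃ with h | h
    · rw [min_eq_left h]
      nth_rewrite 1 [show a i * b i = Real.sqrt ((a i * b i)^2) by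
        rw [Real.sqrt_sq (by positivity)]]
      apply Real.sqrt_le_sqrt
      nlinarith [mul_nonneg ha0 hb0]
    · rw [min_eq_right h]
      nth_rewrite 1 [show d₂₃ = Real.sqrt (d₂₃^2) by
        rw [Real.sqrt_sq hd23pos.le]]
      apply Real.sqrt_le_sqrt
      nlinarith
  have hsum : ∑ i, min (a i * b i) d₂₃ ≤
      (∑ i, Real.sqrt (a i) * Real.sqrt (b i)) * Real.sqrt d₂₃ := by
    rw [Finset.sum_mul]
    exact Finset.sum_le_sum fun i _ => hpt i
  -- Cauchy-Schwarz
  have hcs : (∑ i, Real.sqrt (a i) * Real.sqrt (b i))^2 ≤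
      (∑ i, a i) * (∑ i, b i) := by
    calc (∑ i, Real.sqrt (a i) * Real.sqrt (b i))^2
        ≤ (∑ i, (Real.sqrt (a i))^2) * (∑ i, (Real.sqrt (b i))^2) :=
          Finset.sum_mul_sq_le_sq_mul_sq Finset.univ _ _
      _ = (∑ i, a i) * (∑ i, b i) := by
          congr 1 <;> refine Finset.sum_congr rfl fun i _ => ?_
          · exact Real.sq_sqrt (ha i).1
          · exact Real.sq_sqrt (hb i).1
  have hsa0 : (0:ℝ) ≤ ∑ i, a i := Finset.sum_nonneg fun i _ => (ha i).1
  have hsb0 : (0:ℝ) ≤ ∑ i, b i := Finset.sum_nonneg fun i _ => (hb i).1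
  have hsq0 : (0:ℝ) ≤ ∑ i, Real.sqrt (a i) * Real.sqrt (b i) :=
    Finset.sum_nonneg fun i _ => by positivity
  have hcs' : ∑ i, Real.sqrt (a i) * Real.sqrt (b i) ≤
      Real.sqrt ((d₁₂ * n₁) * (d₁₃ * n₁)) := by
    rw [show ∑ i, Real.sqrt (a i) * Real.sqrt (b i) =
        Real.sqrt ((∑ i, Real.sqrt (a i) * Real.sqrt (b i))^2) by
      rw [Real.sqrt_sq hsq0]]
    apply Real.sqrt_le_sqrt
    refine hcs.trans ?_
    have := mul_le_mul hsa hsb hsb0 (mul_nonneg hd₁₂.le (Nat.cast_nonneg _))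
    linarith
  have hn1 : (0:ℝ) ≤ (n₁:ℝ) := Nat.cast_nonneg _
  have hkey : (∑ i, Real.sqrt (a i) * Real.sqrt (b i)) * Real.sqrt d₂₃ ≤
      n₁ * Real.sqrt (d₁₂ * d₁₃ * d₂₃) := by
    have h1 : Real.sqrt ((d₁₂ * n₁) * (d₁₃ * n₁)) * Real.sqrt d₂₃ =
        n₁ * Real.sqrt (d₁₂ * d₁₃ * d₂₃) := by
      rw [← Real.sqrt_mul (mul_nonneg (mul_nonneg hd₁₂.le (Nat.cast_nonneg _))
        (mul_nonneg hd13.le (Nat.cast_nonneg _))), show (d₁₂ * n₁) * (d₁₃ * n₁) * d₂₃ =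
        (n₁:ℝ)^2 * (d₁₂ * d₁₃ * d₂₃) by ring, Real.sqrt_mul (sq_nonneg _),
        Real.sqrt_sq hn1]
    rw [← h1]
    exact mul_le_mul_of_nonneg_right hcs' (Real.sqrt_nonneg _)
  have : (0:ℝ) ≤ (1:ℝ) := zero_le_one
  linarith [hsum]
end

section
/- Let G be a tripartite graph with parts V_1, V_2, V_3 of sizes n_1, n_2, n_3 ≥ 1 and edge densities d_{1,2} ≤ d_{1,3} ≤ d_{2,3} between the pairs of parts. Then the number of transversal triangles of G is at most min(d_{1,2}, √(d_{1,2}·d_{1,3}·d_{2,3}))·n_1·n_2·n_3 + n_2·n_3. -/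
open Finset

/-- Lemma 2.2 with explicit error term: the number of transversal triangles of a
tripartite graph is at most `min(d₁₂, √(d₁₂d₁₃d₂₃))·n₁n₂n₃ + n₂n₃`. -/
theorem transversal_triangles_le_min_sqrt
    {V : Type*} [Fintype V] (G : SimpleGraph V)
    (V₁ V₂ V₃ : Finset V)
    (hdisj12 : Disjoint V₁ V₂) (hdisj13 : Disjoint V₁ V₃) (hdisj23 : Disjoint V₂ V₃)
    (hpart1 : ∀ u ∈ V₁, ∀ v ∈ V₁, ¬ G.Adj u v)
    (hpart2 : ∀ u ∈ V₂, ∀ v ∈ V₂, ¬ G.Adj u v)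
    (hpart3 : ∀ u ∈ V₃, ∀ v ∈ V₃, ¬ G.Adj u v)
    (n₁ n₂ n₃ : ℕ) (hn1 : V₁.card = n₁) (hn2 : V₂.card = n₂) (hn3 : V₃.card = n₃)
    (hn1' : 1 ≤ n₁) (hn2' : 1 ≤ n₂) (hn3' : 1 ≤ n₃)
    (d₁₂ d₁₃ d₂₃ : ℝ)
    (hd0 : 0 ≤ d₁₂) (h1213 : d₁₂ ≤ d₁₃) (h1323 : d₁₃ ≤ d₂₃) (hd1 : d₂₃ ≤ 1)
    (hd12 : (Nat.card {p : V × V // p.1 ∈ V₁ ∧ p.2 ∈ V₂ ∧ G.Adj p.1 p.2} : ℝ)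
      = d₁₂ * n₁ * n₂)
    (hd13 : (Nat.card {p : V × V // p.1 ∈ V₁ ∧ p.2 ∈ V₃ ∧ G.Adj p.1 p.2} : ℝ)
      = d₁₃ * n₁ * n₃)
    (hd23 : (Nat.card {p : V × V // p.1 ∈ V₂ ∧ p.2 ∈ V₃ ∧ G.Adj p.1 p.2} : ℝ)
      = d₂₃ * n₂ * n₃) :
    (Nat.card {t : V × V × V //
        t.1 ∈ V₁ ∧ t.2.1 ∈ V₂ ∧ t.2.2 ∈ V₃ ∧
        G.Adj t.1 t.2.1 ∧ G.Adj t.1 t.2.2 ∧ G.Adj t.2.1 t.2.2} : ℝ)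
      ≤ min d₁₂ (Real.sqrt (d₁₂ * d₁₃ * d₂₃)) * n₁ * n₂ * n₃ + n₂ * n₃ := by
  classical
  have hd13' : (0:ℝ) ≤ d₁₃ := hd0.trans h1213
  have hd23' : (0:ℝ) ≤ d₂₃ := hd13'.trans h1323
  set A : V → Finset V := fun v => V₂.filter (G.Adj v) with hA
  set B : V → Finset V := fun v => V₃.filter (G.Adj v) with hB
  set E23 : Finset (V × V) := (V₂ ×ˢ V₃).filter (fun p => G.Adj p.1 p.2) with hE23
  set T : Finset (V × V × V) := (V₁ ×ˢ V₂ ×ˢ V₃).filter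
    (fun t => G.Adj t.1 t.2.1 ∧ G.Adj t.1 t.2.2 ∧ G.Adj t.2.1 t.2.2) with hT
  -- translate the Nat.card hypotheses
  have hc12 : Nat.card {p : V × V // p.1 ∈ V₁ ∧ p.2 ∈ V₂ ∧ G.Adj p.1 p.2}
      = ((V₁ ×ˢ V₂).filter fun p => G.Adj p.1 p.2).card := by
    rw [Nat.card_eq_fintype_card]
    exact Fintype.card_of_subtype _ (by intro x; simp [Finset.mem_filter, Finset.mem_product, and_assoc])
  have hc13 : Nat.card {p : V × V // p.1 ∈ V₁ ∧ p.2 ∈ V₃ ∧ G.Adj p.1 p.2}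
      = ((V₁ ×ˢ V₃).filter fun p => G.Adj p.1 p.2).card := by
    rw [Nat.card_eq_fintype_card]
    exact Fintype.card_of_subtype _ (by intro x; simp [Finset.mem_filter, Finset.mem_product, and_assoc])
  have hc23 : Nat.card {p : V × V // p.1 ∈ V₂ ∧ p.2 ∈ V₃ ∧ G.Adj p.1 p.2} = E23.card := by
    rw [Nat.card_eq_fintype_card]
    exact Fintype.card_of_subtype _ (by intro x; simp [hE23, Finset.mem_filter, Finset.mem_product, and_assoc])
  have hcT : Nat.card {t : V × V × V //
        t.1 ∈ V₁ ∧ t.2.1 ∈ V₂ ∧ t.2.2 ∈ V₃ ∧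
        G.Adj t.1 t.2.1 ∧ G.Adj t.1 t.2.2 ∧ G.Adj t.2.1 t.2.2} = T.card := by
    rw [Nat.card_eq_fintype_card]
    refine Fintype.card_of_subtype _ ?_
    intro x; simp [hT, Finset.mem_filter, Finset.mem_product, and_assoc]
  -- fiberwise decomposition of pair counts
  have hfib12 : ((V₁ ×ˢ V₂).filter fun p => G.Adj p.1 p.2).card = ∑ v ∈ V₁, (A v).card := by
    rw [Finset.card_eq_sum_card_fiberwise (f := fun p => p.1) (t := V₁)
      (fun p hp => by simp only [Finset.mem_coe, Finset.mem_filter, Finset.mem_product] at hp; exact hp.1.1)]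
    refine Finset.sum_congr rfl fun v hv => ?_
    refine Finset.card_bij (fun p _ => p.2) ?_ ?_ ?_
    · intro p hp
      simp only [Finset.mem_filter, Finset.mem_product] at hp
      simp only [hA, Finset.mem_filter]
      exact ⟨hp.1.1.2, hp.2 ▸ hp.1.2⟩
    · intro p hp q hq h
      simp only [Finset.mem_filter] at hp hq
      exact Prod.ext (hp.2.trans hq.2.symm) h
    · intro w hw
      simp only [hA, Finset.mem_filter] at hw
      exact ⟨(v, w), by simp [Finset.mem_filter, Finset.mem_product, hv, hw.1, hw.2], rfl⟩
  have hfib13 : ((V₁ ×ˢ V₃).filter fun p => G.Adj p.1 p.2).card = ∑ v ∈ V₁, (B v).card := by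
    rw [Finset.card_eq_sum_card_fiberwise (f := fun p => p.1) (t := V₁)
      (fun p hp => by simp only [Finset.mem_coe, Finset.mem_filter, Finset.mem_product] at hp; exact hp.1.1)]
    refine Finset.sum_congr rfl fun v hv => ?_
    refine Finset.card_bij (fun p _ => p.2) ?_ ?_ ?_
    · intro p hp
      simp only [Finset.mem_filter, Finset.mem_product] at hp
      simp only [hB, Finset.mem_filter]
      exact ⟨hp.1.1.2, hp.2 ▸ hp.1.2⟩
    · intro p hp q hq h
      simp only [Finset.mem_filter] at hp hq
      exact Prod.ext (hp.2.trans hq.2.symm) h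
    · intro w hw
      simp only [hB, Finset.mem_filter] at hw
      exact ⟨(v, w), by simp [Finset.mem_filter, Finset.mem_product, hv, hw.1, hw.2], rfl⟩
  -- fiberwise decomposition of the triangle count
  have hfibT : T.card = ∑ v ∈ V₁, ((A v ×ˢ B v).filter fun p => G.Adj p.1 p.2).card := by
    rw [Finset.card_eq_sum_card_fiberwise (f := fun t => t.1) (t := V₁)
      (fun t ht => by simp only [hT, Finset.mem_coe, Finset.mem_filter, Finset.mem_product] at ht; exact ht.1.1)]
    refine Finset.sum_congr rfl fun v hv => ?_
    refine Finset.card_bij (fun t _ => t.2) ?_ ?_ ?_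
    · intro t ht
      simp only [hT, Finset.mem_filter, Finset.mem_product] at ht
      obtain ⟨⟨⟨h1, h2, h3⟩, ha1, ha2, ha3⟩, rfl⟩ := ht
      simp only [hA, hB, Finset.mem_filter, Finset.mem_product]
      exact ⟨⟨⟨h2, ha1⟩, h3, ha2⟩, ha3⟩
    · intro t ht s hs h
      simp only [Finset.mem_filter] at ht hs
      exact Prod.ext (ht.2.trans hs.2.symm) h
    · intro p hp
      simp only [hA, hB, Finset.mem_filter, Finset.mem_product] at hp
      exact ⟨(v, p), by simp [hT, Finset.mem_filter, Finset.mem_product, hv,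
        hp.1.1.1, hp.1.1.2, hp.1.2.1, hp.1.2.2, hp.2], rfl⟩
  -- real-valued quantities
  set a : V → ℝ := fun v => ((A v).card : ℝ) with ha
  set b : V → ℝ := fun v => ((B v).card : ℝ) with hb
  set tv : V → ℝ := fun v => (((A v ×ˢ B v).filter fun p => G.Adj p.1 p.2).card : ℝ) with htv
  have hsa : ∑ v ∈ V₁, a v = d₁₂ * n₁ * n₂ := by
    rw [← hd12, hc12, hfib12]; push_cast; rfl
  have hsb : ∑ v ∈ V₁, b v = d₁₃ * n₁ * n₃ := by
    rw [← hd13, hc13, hfib13]; push_cast; rfl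
  have he23 : (E23.card : ℝ) = d₂₃ * n₂ * n₃ := by rw [← hd23, hc23]
  have hTsum : ((T.card : ℝ)) = ∑ v ∈ V₁, tv v := by rw [hfibT]; push_cast; rfl
  have ha0 : ∀ v, 0 ≤ a v := fun v => Nat.cast_nonneg _
  have hb0 : ∀ v, 0 ≤ b v := fun v => Nat.cast_nonneg _
  have htv0 : ∀ v, 0 ≤ tv v := fun v => Nat.cast_nonneg _
  have he0 : (0:ℝ) ≤ E23.card := Nat.cast_nonneg _
  have htv_ab : ∀ v, tv v ≤ a v * b v := by
    intro v
    have hnat : ((A v ×ˢ B v).filter fun p => G.Adj p.1 p.2).card ≤ (A v).card * (B v).card :=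
      (Finset.card_le_card (Finset.filter_subset _ _)).trans_eq (Finset.card_product _ _)
    simp only [htv, ha, hb]
    exact_mod_cast hnat
  have htv_e : ∀ v, tv v ≤ (E23.card : ℝ) := by
    intro v
    have hnat : ((A v ×ˢ B v).filter fun p => G.Adj p.1 p.2).card ≤ E23.card :=
      Finset.card_le_card (Finset.filter_subset_filter _
        (Finset.product_subset_product (Finset.filter_subset _ _) (Finset.filter_subset _ _)))
    simp only [htv]
    exact_mod_cast hnat
  have hbn3 : ∀ v, b v ≤ (n₃ : ℝ) := by
    intro v
    have hnat : (B v).card ≤ n₃ := hn3 ▸ Finset.card_le_card (Finset.filter_subset _ _)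
    simp only [hb]
    exact_mod_cast hnat
  -- Bound 1 : T ≤ d₁₂ n₁ n₂ n₃
  have bound1 : (T.card : ℝ) ≤ d₁₂ * n₁ * n₂ * n₃ := by
    rw [hTsum]
    calc ∑ v ∈ V₁, tv v ≤ ∑ v ∈ V₁, a v * (n₃:ℝ) := by
          refine Finset.sum_le_sum fun v _ => ?_
          exact (htv_ab v).trans (mul_le_mul_of_nonneg_left (hbn3 v) (ha0 v))
      _ = (∑ v ∈ V₁, a v) * n₃ := by rw [← Finset.sum_mul]
      _ = d₁₂ * n₁ * n₂ * n₃ := by rw [hsa]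
  -- Bound 2 : T ≤ √(d₁₂d₁₃d₂₃) n₁ n₂ n₃
  have bound2 : (T.card : ℝ) ≤ Real.sqrt (d₁₂ * d₁₃ * d₂₃) * n₁ * n₂ * n₃ := by
    have step1 : ∀ v, tv v ≤ Real.sqrt (a v) * Real.sqrt (b v) * Real.sqrt (E23.card) := by
      intro v
      have h1 : tv v * tv v ≤ (a v * b v) * (E23.card : ℝ) :=
        mul_le_mul (htv_ab v) (htv_e v) (htv0 v) (mul_nonneg (ha0 v) (hb0 v))
      have h2 : tv v = Real.sqrt (tv v * tv v) := (Real.sqrt_mul_self (htv0 v)).symm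
      have h3 := Real.sqrt_le_sqrt h1
      rw [Real.sqrt_mul (mul_nonneg (ha0 v) (hb0 v)), Real.sqrt_mul (ha0 v)] at h3
      rw [h2]; exact h3
    calc (T.card : ℝ) = ∑ v ∈ V₁, tv v := hTsum
      _ ≤ ∑ v ∈ V₁, Real.sqrt (a v) * Real.sqrt (b v) * Real.sqrt (E23.card) :=
          Finset.sum_le_sum fun v _ => step1 v
      _ = (∑ v ∈ V₁, Real.sqrt (a v) * Real.sqrt (b v)) * Real.sqrt (E23.card) := by
          rw [← Finset.sum_mul]
      _ ≤ Real.sqrt (∑ v ∈ V₁, a v) * Real.sqrt (∑ v ∈ V₁, b v) * Real.sqrt (E23.card) := by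
          refine mul_le_mul_of_nonneg_right ?_ (Real.sqrt_nonneg _)
          exact Real.sum_sqrt_mul_sqrt_le _ ha0 hb0
      _ = Real.sqrt ((d₁₂ * n₁ * n₂) * (d₁₃ * n₁ * n₃) * (d₂₃ * n₂ * n₃)) := by
          rw [hsa, hsb, he23, ← Real.sqrt_mul (by positivity), ← Real.sqrt_mul (by positivity)]
      _ = Real.sqrt ((d₁₂ * d₁₃ * d₂₃) * ((n₁:ℝ) * n₂ * n₃)^2) := by ring_nf
      _ = Real.sqrt (d₁₂ * d₁₃ * d₂₃) * ((n₁:ℝ) * n₂ * n₃) := by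
          rw [Real.sqrt_mul (by positivity), Real.sqrt_sq (by positivity)]
      _ = Real.sqrt (d₁₂ * d₁₃ * d₂₃) * n₁ * n₂ * n₃ := by ring
  -- combine
  rw [hcT]
  have hn23 : (0:ℝ) ≤ (n₂:ℝ) * n₃ := by positivity
  rcases le_total d₁₂ (Real.sqrt (d₁₂ * d₁₃ * d₂₃)) with h | h
  · rw [min_eq_left h]; linarith
  · rw [min_eq_right h]; linarith
end

section
/- Suppose every vertex of a finite simple graph Q in a connected component C with at least 3 vertices has degree at least 2, Q has no even cycle, every odd cycle of Q is induced, each component contains at most one odd cycle, and no component contains an odd cycle with a pendant path. Then C is isomorphic to an odd cycle C_{2s+1} for some s ≥ 1. -/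
open SimpleGraph


private lemma support_getElem? {V : Type*} {G : SimpleGraph V} {u v : V} (p : G.Walk u v) :
    ∀ {i : ℕ}, i ≤ p.length → p.support[i]? = some (p.getVert i) := by
  induction p with
  | nil =>
    intro i hi
    simp only [Walk.length_nil, Nat.le_zero] at hi
    subst hi
    simp [Walk.getVert]
  | cons h q ih =>
    intro i hi
    cases i with
    | zero => simp [Walk.support_cons]
    | succ m =>
      rw [Walk.support_cons]
      simp only [List.getElem?_cons_succ, Walk.getVert_cons_succ]
      exact ih (by simpa using hi)

private lemma cycle_getVert_inj {V : Type*} {G : SimpleGraph V} {v : V} {c : G.Walk v v}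
    (hc : c.IsCycle) {i j : ℕ} (hi : i < c.length) (hj : j < c.length)
    (h : c.getVert i = c.getVert j) : i = j := by
  have hnd : c.support.tail.Nodup := hc.support_nodup
  have hlen : c.support.length = c.length + 1 := c.length_support
  have htail : c.support.tail.length = c.length := by
    rw [List.length_tail, hlen]; omega
  have key : ∀ k, 1 ≤ k → k ≤ c.length → c.support.tail[k-1]? = some (c.getVert k) := by
    intro k h1 h2
    have hx := support_getElem? c h2
    rw [c.support_eq_cons] at hx
    obtain ⟨m, rfl⟩ : ∃ m, k = m + 1 := ⟨k - 1, by omega⟩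
    simpa using hx
  have hvlen : c.getVert c.length = v := c.getVert_length
  rcases Nat.eq_zero_or_pos i with hi0 | hi1 <;> rcases Nat.eq_zero_or_pos j with hj0 | hj1
  · omega
  · -- i = 0, j ≥ 1 : getVert j = v = getVert length
    exfalso
    subst hi0
    rw [c.getVert_zero] at h
    have h1 := key j hj1 (le_of_lt hj)
    have h2 := key c.length (by omega) le_rfl
    rw [hvlen] at h2; rw [← h] at h1
    have := (List.getElem?_inj (by omega : j - 1 < c.support.tail.length) hnd).mp (h1.trans h2.symm)
    omega
  · exfalso
    subst hj0
    rw [c.getVert_zero] at h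
    have h1 := key i hi1 (le_of_lt hi)
    have h2 := key c.length (by omega) le_rfl
    rw [hvlen] at h2; rw [h] at h1
    have := (List.getElem?_inj (by omega : i - 1 < c.support.tail.length) hnd).mp (h1.trans h2.symm)
    omega
  · have h1 := key i hi1 (le_of_lt hi)
    have h2 := key j hj1 (le_of_lt hj)
    rw [h] at h1
    have := (List.getElem?_inj (by omega : i - 1 < c.support.tail.length) hnd).mp (h1.trans h2.symm)
    omega


private lemma mod_helper {a n : ℕ} (h : a < 2 * n) (hn : 0 < n) :
    a % n = if a < n then a else a - n := by
  split
  · exact Nat.mod_eq_of_lt ‹_›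
  · rw [Nat.mod_eq_sub_mod (by omega), Nat.mod_eq_of_lt (by omega)]

private lemma iso_cycle {V : Type*} [DecidableEq V] {G : SimpleGraph V} {s : Set V} {v : V}
    (c : G.Walk v v) (hc : c.IsCycle)
    (hsupp : ∀ x, x ∈ s ↔ x ∈ c.support)
    (hind : ∀ u w, u ∈ c.support → w ∈ c.support → G.Adj u w → s(u, w) ∈ c.edges) :
    Nonempty (G.induce s ≃g cycleGraph c.length) := by
  set n := c.length with hn
  have h3 : 3 ≤ n := hc.three_le_length
  have hmem : ∀ i : Fin n, c.getVert i.val ∈ s := fun i =>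
    (hsupp _).mpr (Walk.mem_support_iff_exists_getVert.mpr ⟨i.val, rfl, le_of_lt i.isLt⟩)
  set F : Fin n → s := fun i => ⟨c.getVert i.val, hmem i⟩ with hF
  have hFinj : Function.Injective F := fun i j hij =>
    Fin.ext (cycle_getVert_inj hc i.isLt j.isLt (congrArg Subtype.val hij))
  have hFsurj : Function.Surjective F := by
    rintro ⟨x, hx⟩
    obtain ⟨k, hk1, hk2⟩ := Walk.mem_support_iff_exists_getVert.mp ((hsupp x).mp hx)
    rcases eq_or_lt_of_le hk2 with hkn | hkn
    · refine ⟨⟨0, by omega⟩, Subtype.ext ?_⟩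
      show c.getVert 0 = x
      rw [Walk.getVert_zero, ← hk1, hkn]
      exact c.getVert_length.symm
    · exact ⟨⟨k, hkn⟩, Subtype.ext hk1⟩
  have adjmod : ∀ i j : Fin n, G.Adj (c.getVert i.val) (c.getVert j.val) ↔
      (j.val = (i.val + 1) % n ∨ i.val = (j.val + 1) % n) := by
    intro i j
    constructor
    · intro hadj
      have hsup : ∀ m : Fin n, c.getVert m.val ∈ c.support := fun m => (hsupp _).mp (hmem m)
      have hedge := hind _ _ (hsup i) (hsup j) hadj
      have htsg : c.toSubgraph.Adj (c.getVert i.val) (c.getVert j.val) :=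
        (Subgraph.mem_edgeSet).mp ((c.mem_edges_toSubgraph).mpr hedge)
      obtain ⟨k, hkeq, hklt⟩ := (Walk.toSubgraph_adj_iff c).mp htsg
      have hnext : ∀ (m : Fin n), c.getVert ((m.val + 1) % n) = c.getVert (m.val + 1) := by
        intro m
        by_cases hmn : m.val + 1 = n
        · rw [hmn, Nat.mod_self, Walk.getVert_zero, hn, c.getVert_length]
        · rw [Nat.mod_eq_of_lt (by have := m.isLt; omega)]
      rw [Sym2.eq_iff] at hkeq
      rcases hkeq with ⟨hk1, hk2⟩ | ⟨hk1, hk2⟩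
      · left
        have hik : k = i.val := cycle_getVert_inj hc hklt i.isLt hk1
        have h5 : c.getVert ((i.val + 1) % n) = c.getVert j.val := by
          rw [hnext i, ← hik]; exact hk2
        exact (cycle_getVert_inj hc (Nat.mod_lt _ (by omega)) j.isLt h5).symm
      · right
        have hjk : k = j.val := cycle_getVert_inj hc hklt j.isLt hk1
        have h5 : c.getVert ((j.val + 1) % n) = c.getVert i.val := by
          rw [hnext j, ← hjk]; exact hk2
        exact (cycle_getVert_inj hc (Nat.mod_lt _ (by omega)) i.isLt h5).symm
    · intro hmod
      rcases hmod with hmod | hmod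
      · by_cases hmn : i.val + 1 = n
        · have hj0 : j.val = 0 := by rw [hmod, hmn, Nat.mod_self]
          have hlt : i.val < c.length := by rw [← hn]; omega
          have h6 : c.getVert (i.val + 1) = c.getVert j.val := by
            rw [hmn, hj0, Walk.getVert_zero]; exact c.getVert_length
          exact h6 ▸ c.adj_getVert_succ hlt
        · have hje : j.val = i.val + 1 := by
            rw [hmod, Nat.mod_eq_of_lt (by have := i.isLt; omega)]
          rw [hje]
          exact c.adj_getVert_succ (by rw [← hn]; have := i.isLt; omega)
      · by_cases hmn : j.val + 1 = n
        · have hi0 : i.val = 0 := by rw [hmod, hmn, Nat.mod_self]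
          have hlt : j.val < c.length := by rw [← hn]; omega
          have h6 : c.getVert (j.val + 1) = c.getVert i.val := by
            rw [hmn, hi0, Walk.getVert_zero]; exact c.getVert_length
          exact (h6 ▸ c.adj_getVert_succ hlt).symm
        · have hie : i.val = j.val + 1 := by
            rw [hmod, Nat.mod_eq_of_lt (by have := j.isLt; omega)]
          rw [hie]
          exact (c.adj_getVert_succ (by rw [← hn]; have := j.isLt; omega)).symm
  have subval : ∀ i j : Fin n, (j - i).val = (n - i.val + j.val) % n := by
    intro i j
    rw [Fin.sub_def]
  have modeq : ∀ i j : Fin n, ((j - i).val = 1 ↔ j.val = (i.val + 1) % n) := by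
    intro i j
    have hi := i.isLt; have hj := j.isLt
    rw [subval, mod_helper (by omega) (by omega), mod_helper (by omega) (by omega)]
    split_ifs <;> omega
  let e : Fin n ≃ s := Equiv.ofBijective F ⟨hFinj, hFsurj⟩
  refine ⟨⟨e.symm, ?_⟩⟩
  intro a b
  obtain ⟨i, rfl⟩ := e.surjective a
  obtain ⟨j, rfl⟩ := e.surjective b
  simp only [Equiv.symm_apply_apply]
  rw [cycleGraph_adj']
  have hred : (G.induce s).Adj (e i) (e j) ↔ G.Adj (c.getVert i.val) (c.getVert j.val) := by
    show (G.induce s).Adj (F i) (F j) ↔ _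
    rw [hF]
    exact comap_adj
  rw [hred, adjmod, modeq, modeq]
  tauto


/-- Structural conclusion in the proof of Claim 2.9: a connected component `C`
with at least 3 vertices, in a graph where every vertex of `C` has degree ≥ 2,
there is no even cycle, every odd cycle is induced, cycles in a common
component have the same vertex set, and every vertex adjacent to a cycle lies
on it, must be isomorphic to an odd cycle `C_{2s+1}`. -/
theorem component_is_odd_cycle {V : Type*} [Fintype V] [DecidableEq V]
    (Q : SimpleGraph V) [DecidableRel Q.Adj]
    (K : Q.ConnectedComponent)
    (hcard : 3 ≤ K.supp.toFinset.card)
    (hdeg : ∀ v ∈ K.supp, 2 ≤ Q.degree v)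
    (hnoeven : ∀ (v : V) (c : Q.Walk v v), c.IsCycle → ¬ Even c.length)
    (hinduced : ∀ (v : V) (c : Q.Walk v v), c.IsCycle → Odd c.length →
      ∀ u w, u ∈ c.support → w ∈ c.support → Q.Adj u w → s(u, w) ∈ c.edges)
    (hunique : ∀ (v₁ v₂ : V) (c₁ : Q.Walk v₁ v₁) (c₂ : Q.Walk v₂ v₂),
      c₁.IsCycle → c₂.IsCycle → Q.Reachable v₁ v₂ →
      c₁.support.toFinset = c₂.support.toFinset)
    (hnopendant : ∀ (v : V) (c : Q.Walk v v), c.IsCycle →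
      ∀ u ∈ c.support, ∀ w, Q.Adj u w → w ∈ c.support) :
    ∃ s : ℕ, 1 ≤ s ∧ Nonempty ((Q.induce K.supp) ≃g cycleGraph (2 * s + 1)) := by
  have hKmem : ∀ {a b : V}, a ∈ K.supp → Q.Adj a b → b ∈ K.supp := by
    intro a b ha hab
    rw [ConnectedComponent.mem_supp_iff] at ha ⊢
    rw [← ha]
    exact (ConnectedComponent.sound hab.symm.reachable)
  have hwalkmem : ∀ {a b : V} (w : Q.Walk a b), a ∈ K.supp → ∀ x ∈ w.support, x ∈ K.supp := by
    intro a b w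
    induction w with
    | nil =>
      intro ha x hx
      rw [Walk.support_nil, List.mem_singleton] at hx
      subst hx; exact ha
    | cons h p ih =>
      intro ha x hx
      rw [Walk.support_cons] at hx
      rcases List.mem_cons.mp hx with h1 | h2
      · subst h1; exact ha
      · exact ih (hKmem ha h) x h2
  have hreach_ind : ∀ {a b : V} (w : Q.Walk a b) (ha : a ∈ K.supp) (hb : b ∈ K.supp),
      (Q.induce K.supp).Reachable ⟨a, ha⟩ ⟨b, hb⟩ := by
    intro a b w
    induction w with
    | nil => intro ha hb; rfl
    | cons h p ih =>
      intro ha hb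
      exact ((by exact h : (Q.induce K.supp).Adj ⟨_, ha⟩ ⟨_, hKmem ha h⟩).reachable).trans
        (ih (hKmem ha h) hb)
  have hne : K.supp.toFinset.Nonempty := by rw [← Finset.card_pos]; omega
  obtain ⟨v₀, hv₀'⟩ := hne
  rw [Set.mem_toFinset] at hv₀'
  haveI : Nonempty ↥K.supp := ⟨⟨v₀, hv₀'⟩⟩
  have hconn : (Q.induce K.supp).Connected := by
    refine ⟨?_⟩
    rintro ⟨a, ha⟩ ⟨b, hb⟩
    have hr : Q.Reachable a b := by
      rw [ConnectedComponent.mem_supp_iff] at ha hb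
      exact ConnectedComponent.exact (ha.trans hb.symm)
    obtain ⟨w⟩ := hr
    exact hreach_ind w ha hb
  have hdeg' : ∀ x : K.supp, 2 ≤ (Q.induce K.supp).degree x := by
    intro x
    refine le_trans (hdeg x.val x.2) ?_
    have : Q.neighborFinset x.val ⊆ Finset.image Subtype.val ((Q.induce K.supp).neighborFinset x) := by
      intro w hw
      rw [mem_neighborFinset] at hw
      have hwK : w ∈ K.supp := hKmem x.2 hw
      refine Finset.mem_image.mpr ⟨⟨w, hwK⟩, ?_, rfl⟩
      rw [mem_neighborFinset]
      exact hw
    calc Q.degree x.val ≤ (Finset.image Subtype.val ((Q.induce K.supp).neighborFinset x)).card :=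
          Finset.card_le_card this
      _ ≤ (Q.induce K.supp).degree x := Finset.card_image_le
  have hncyc : ¬ (Q.induce K.supp).IsAcyclic := by
    intro hA
    have htree : (Q.induce K.supp).IsTree := ⟨hconn, hA⟩
    have hedge := htree.card_edgeFinset
    have hsum := sum_degrees_eq_twice_card_edges (Q.induce K.supp)
    have hge := Finset.card_nsmul_le_sum Finset.univ (fun x => (Q.induce K.supp).degree x) 2
      (fun x _ => hdeg' x)
    rw [Finset.card_univ] at hge
    have hcv := Set.toFinset_card K.supp
    simp only [smul_eq_mul] at hge
    omega
  simp only [IsAcyclic, not_forall, not_not] at hncyc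
  obtain ⟨v', c', hc'⟩ := hncyc
  let c : Q.Walk v'.val v'.val := c'.map (Embedding.induce K.supp).toHom
  have hc : c.IsCycle := hc'.map (Subtype.val_injective)
  have hlen : c.length = c'.length := Walk.length_map _ _
  have hodd : Odd c.length := Nat.not_even_iff_odd.mp (hnoeven _ c hc)
  have h3 : 3 ≤ c.length := hc.three_le_length
  obtain ⟨sh, hsh⟩ := hodd
  refine ⟨sh, by omega, ?_⟩
  -- support characterization
  have hsupps : ∀ x, x ∈ K.supp ↔ x ∈ c.support := by
    have hclosed : ∀ {a b : V} (w : Q.Walk a b), a ∈ c.support → b ∈ c.support := by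
      intro a b w
      induction w with
      | nil => exact id
      | cons h p ih => intro ha; exact ih (hnopendant _ c hc _ ha _ h)
    intro x
    constructor
    · intro hx
      have hr : Q.Reachable v'.val x := by
        have h1 := v'.2
        rw [ConnectedComponent.mem_supp_iff] at h1 hx
        exact ConnectedComponent.exact (h1.trans hx.symm)
      obtain ⟨w⟩ := hr
      exact hclosed w c.start_mem_support
    · intro hx
      have hr : Q.Reachable v'.val x := (c.takeUntil x hx).reachable
      rw [ConnectedComponent.mem_supp_iff] at *
      rw [← (ConnectedComponent.sound hr)]
      exact v'.2
  obtain ⟨iso⟩ := iso_cycle c hc hsupps (hinduced _ c hc ⟨sh, hsh⟩)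
  rw [hsh] at iso
  exact ⟨iso⟩
end

section
/- Let k ≥ 2, and for 1 ≤ i < j ≤ k let d_{i,j} ∈ [0,1]. Let G be a k-partite graph with parts V_1,...,V_k of sizes n_1,...,n_k, where the edge density between V_i and V_j is d_{i,j}. Then for every odd cycle decomposition H of K_k, the number of independent transversals of G is at most n_1···n_k · ∏_{F∈H} ∏_{(i,j)∈E(F)} √(1-d_{i,j}) + C·(n_1···n_k)/min_i n_i, where C depends only on k. -/
/-- A part of an odd cycle decomposition of `K_k`: an odd cycle (given by its
cyclic list of vertices), a double edge, or an isolated vertex. -/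
inductive OCDPart (k : ℕ) where
  | cycle (l : List (Fin k))
  | double (i j : Fin k)
  | single (i : Fin k)

/-- The vertices of a part. -/
def OCDPart.verts {k : ℕ} : OCDPart k → List (Fin k)
  | .cycle l => l
  | .double i j => [i, j]
  | .single i => [i]

/-- The edges of a part (a double edge contributes its edge twice; an odd cycle
contributes its consecutive pairs cyclically). -/
def OCDPart.edges {k : ℕ} : OCDPart k → List (Fin k × Fin k)
  | .cycle l => l.zip (l.rotate 1)
  | .double i j => [(i, j), (i, j)]
  | .single _ => []

/-- `L` is an odd cycle decomposition of `K_k`: the parts are vertex-disjoint,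
they cover all `k` vertices, and every cycle part is an odd cycle of length at
least 3. -/
def IsOCD {k : ℕ} (L : List (OCDPart k)) : Prop :=
  (L.flatMap OCDPart.verts).Nodup ∧ (∀ v : Fin k, v ∈ L.flatMap OCDPart.verts) ∧
    ∀ p ∈ L, ∀ l, p = OCDPart.cycle l → Odd l.length ∧ 3 ≤ l.length

namespace ITUB

open Finset

variable {α : Type*} [Fintype α] [DecidableEq α]

set_option maxHeartbeats 1000000
set_option linter.unusedSectionVars false

noncomputable def sumSq (A : Matrix α α ℝ) : ℝ := ∑ x, ∑ y, A x y ^ 2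

lemma sumSq_nonneg (A : Matrix α α ℝ) : 0 ≤ sumSq A :=
  Finset.sum_nonneg fun _ _ => Finset.sum_nonneg fun _ _ => sq_nonneg _

noncomputable def frob (A : Matrix α α ℝ) : ℝ := Real.sqrt (sumSq A)

lemma frob_nonneg (A : Matrix α α ℝ) : 0 ≤ frob A := Real.sqrt_nonneg _

lemma trace_mul_le (A B : Matrix α α ℝ) : Matrix.trace (A * B) ≤ frob A * frob B := by
  have h1 : Matrix.trace (A * B) = ∑ q ∈ univ ×ˢ univ, A q.1 q.2 * B q.2 q.1 := by
    rw [Finset.sum_product]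
    simp [Matrix.trace, Matrix.diag, Matrix.mul_apply]
  have h2 : (∑ q ∈ univ ×ˢ univ, A q.1 q.2 * B q.2 q.1) ^ 2 ≤ sumSq A * sumSq B := by
    refine le_trans
      (Finset.sum_mul_sq_le_sq_mul_sq (univ ×ˢ univ) (fun q : α × α => A q.1 q.2) (fun q : α × α => B q.2 q.1)) ?_
    have hA : ∑ q ∈ univ ×ˢ univ, A q.1 q.2 ^ 2 = sumSq A := by
      rw [Finset.sum_product]; rfl
    have hB : ∑ q ∈ univ ×ˢ univ, B q.2 q.1 ^ 2 = sumSq B := by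
      rw [Finset.sum_product, sumSq]; exact Finset.sum_comm
    rw [hA, hB]
  calc Matrix.trace (A * B) ≤ |Matrix.trace (A * B)| := le_abs_self _
    _ = Real.sqrt (Matrix.trace (A * B) ^ 2) := (Real.sqrt_sq_eq_abs _).symm
    _ ≤ Real.sqrt (sumSq A * sumSq B) := Real.sqrt_le_sqrt (by rw [h1]; exact h2)
    _ = frob A * frob B := Real.sqrt_mul (sumSq_nonneg A) _

lemma sumSq_mul_le (A B : Matrix α α ℝ) : sumSq (A * B) ≤ sumSq A * sumSq B := by
  calc sumSq (A * B) = ∑ x, ∑ y, (∑ z, A x z * B z y) ^ 2 := by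
        simp only [sumSq, Matrix.mul_apply]
    _ ≤ ∑ x, ∑ y, (∑ z, A x z ^ 2) * ∑ z, B z y ^ 2 :=
        Finset.sum_le_sum fun x _ => Finset.sum_le_sum fun y _ =>
          Finset.sum_mul_sq_le_sq_mul_sq _ _ _
    _ = (∑ x, ∑ z, A x z ^ 2) * ∑ y, ∑ z, B z y ^ 2 := (Finset.sum_mul_sum _ _ _ _).symm
    _ = sumSq A * sumSq B := by
        rw [sumSq, sumSq]
        congr 1
        exact Finset.sum_comm

lemma frob_mul_le (A B : Matrix α α ℝ) : frob (A * B) ≤ frob A * frob B := by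
  rw [frob, frob, frob, ← Real.sqrt_mul (sumSq_nonneg A)]
  exact Real.sqrt_le_sqrt (sumSq_mul_le A B)

lemma prod_map_frob_nonneg (L : List (Matrix α α ℝ)) : 0 ≤ (L.map frob).prod := by
  induction L with
  | nil => simp
  | cons B L ih => rw [List.map_cons, List.prod_cons]; exact mul_nonneg (frob_nonneg B) ih

lemma frob_mul_list_le : ∀ (L : List (Matrix α α ℝ)) (A : Matrix α α ℝ),
    frob (A * L.prod) ≤ frob A * (L.map frob).prod
  | [], A => by simp
  | B :: L, A => by
    rw [List.prod_cons, ← mul_assoc]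
    refine le_trans (frob_mul_list_le L (A * B)) ?_
    rw [List.map_cons, List.prod_cons, ← mul_assoc]
    exact mul_le_mul_of_nonneg_right (frob_mul_le A B) (prod_map_frob_nonneg L)


lemma prod_ofFn_apply :
    ∀ (m : ℕ) (B : Fin m → Matrix α α ℝ) (a b : α),
      (List.ofFn B).prod a b =
        ∑ x : Fin (m + 1) → α,
          if x 0 = a ∧ x (Fin.last m) = b then
            ∏ t : Fin m, B t (x t.castSucc) (x t.succ) else 0
  | 0, B, a, b => by
    rw [List.ofFn_zero, List.prod_nil]
    rw [← (Equiv.funUnique (Fin 1) α).symm.sum_comp]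
    simp only [Equiv.funUnique_symm_apply]
    simp [ite_and, Finset.sum_ite_eq', Matrix.one_apply]
  | (m + 1), B, a, b => by
    have IH := prod_ofFn_apply m (fun i => B i.succ)
    rw [List.ofFn_succ, List.prod_cons, Matrix.mul_apply]
    simp only [IH, Finset.mul_sum]
    rw [← (Fin.consEquiv (fun _ : Fin (m + 2) => α)).sum_comp, Fintype.sum_prod_type]
    simp only [Fin.consEquiv, Equiv.coe_fn_mk]
    conv_lhs => rw [Finset.sum_comm]
    conv_rhs => rw [Finset.sum_comm]
    refine Finset.sum_congr rfl fun y _ => ?_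
    have hlast : ∀ c : α, (Fin.cons c y : Fin (m + 2) → α) (Fin.last (m + 1)) = y (Fin.last m) := by
      intro c; rw [← Fin.succ_last, Fin.cons_succ]
    have hprod : ∀ c : α,
        (∏ t : Fin (m + 1), B t ((Fin.cons c y : Fin (m + 2) → α) t.castSucc)
            ((Fin.cons c y : Fin (m + 2) → α) t.succ)) =
          B 0 c (y 0) * ∏ t : Fin m, B t.succ (y t.castSucc) (y t.succ) := by
      intro c
      rw [Fin.prod_univ_succ]
      simp [Fin.cons_succ, Fin.cons_zero, ← Fin.succ_castSucc]
    have hL : (∑ c : α, B 0 a c *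
          (if y 0 = c ∧ y (Fin.last m) = b then
            (∏ t : Fin m, B t.succ (y t.castSucc) (y t.succ)) else 0))
        = B 0 a (y 0) * (if y 0 = y 0 ∧ y (Fin.last m) = b then
            (∏ t : Fin m, B t.succ (y t.castSucc) (y t.succ)) else 0) :=
      Finset.sum_eq_single (y 0)
        (fun c _ hc => by rw [if_neg (fun h => hc h.1.symm), mul_zero])
        (fun h => absurd (Finset.mem_univ _) h)
    have hR : (∑ c : α,
          (if (Fin.cons c y : Fin (m + 2) → α) 0 = a ∧
              (Fin.cons c y : Fin (m + 2) → α) (Fin.last (m + 1)) = b then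
            (∏ t : Fin (m + 1), B t ((Fin.cons c y : Fin (m + 2) → α) t.castSucc)
              ((Fin.cons c y : Fin (m + 2) → α) t.succ)) else 0))
        = (if (Fin.cons a y : Fin (m + 2) → α) 0 = a ∧
              (Fin.cons a y : Fin (m + 2) → α) (Fin.last (m + 1)) = b then
            (∏ t : Fin (m + 1), B t ((Fin.cons a y : Fin (m + 2) → α) t.castSucc)
              ((Fin.cons a y : Fin (m + 2) → α) t.succ)) else 0) :=
      Finset.sum_eq_single a
        (fun c _ hc => if_neg (fun h => hc (by simpa using h.1)))
        (fun h => absurd (Finset.mem_univ _) h)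
    rw [hL]; refine Eq.trans ?_ hR.symm; rw [hprod, hlast, Fin.cons_zero]
    by_cases hb : y (Fin.last m) = b <;> simp [hb]


lemma fin_succ_eq_castSucc {m : ℕ} (t : Fin (m + 1)) (h : t ≠ Fin.last m) :
    t.succ = (t + 1).castSucc := by
  have hv : (t : ℕ) < m := lt_of_le_of_ne (Nat.lt_succ_iff.1 t.isLt) (fun hc => h (Fin.ext hc))
  apply Fin.ext
  simp only [Fin.val_succ, Fin.coe_castSucc, Fin.val_add, Fin.val_one']
  rw [Nat.add_mod_mod, Nat.mod_eq_of_lt (by omega)]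

lemma fin_succ_eq_last {m : ℕ} (t : Fin (m + 1)) (h : t = Fin.last m) :
    t.succ = Fin.last (m + 1) := by subst h; exact Fin.succ_last m

lemma snoc_succ {m : ℕ} (g : Fin (m + 1) → α) (t : Fin (m + 1)) :
    (Fin.snoc g (g 0) : Fin (m + 2) → α) t.succ = g (t + 1) := by
  by_cases h : t = Fin.last m
  · rw [fin_succ_eq_last t h, Fin.snoc_last, h, Fin.last_add_one]
  · rw [fin_succ_eq_castSucc t h, Fin.snoc_castSucc]

lemma pinned_succ {m : ℕ} (x : Fin (m + 2) → α) (hx : x (Fin.last (m + 1)) = x 0)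
    (t : Fin (m + 1)) : x t.succ = x (t + 1).castSucc := by
  by_cases h : t = Fin.last m
  · rw [fin_succ_eq_last t h, hx, h, Fin.last_add_one, Fin.castSucc_zero]
  · rw [fin_succ_eq_castSucc t h]

def cyclicEquiv (m : ℕ) (Q : Fin (m + 1) → α → α → Prop) :
    {x : Fin (m + 2) → α //
        x (Fin.last (m + 1)) = x 0 ∧ ∀ t : Fin (m + 1), Q t (x t.castSucc) (x t.succ)} ≃
      {g : Fin (m + 1) → α // ∀ t, Q t (g t) (g (t + 1))} where
  toFun x := ⟨fun t => x.1 t.castSucc, fun t => by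
    have h := x.2.2 t
    rwa [pinned_succ x.1 x.2.1 t] at h⟩
  invFun g := ⟨Fin.snoc g.1 (g.1 0), by
    refine ⟨by rw [Fin.snoc_last, ← Fin.castSucc_zero (n := m + 1), Fin.snoc_castSucc], fun t => ?_⟩
    rw [Fin.snoc_castSucc, snoc_succ]
    exact g.2 t⟩
  left_inv x := by
    apply Subtype.ext
    funext j
    show (Fin.snoc (fun t : Fin (m + 1) => x.1 t.castSucc)
        (x.1 (Fin.castSucc (0 : Fin (m + 1)))) : Fin (m + 2) → α) j = x.1 j
    refine Fin.lastCases ?_ (fun i => ?_) j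
    · rw [Fin.snoc_last, Fin.castSucc_zero]
      exact x.2.1.symm
    · rw [Fin.snoc_castSucc]
  right_inv g := by
    apply Subtype.ext
    funext t
    show (Fin.snoc g.1 (g.1 0) : Fin (m + 2) → α) t.castSucc = g.1 t
    exact Fin.snoc_castSucc _ _ _

lemma card_cyclic (m : ℕ) (Q : Fin (m + 1) → α → α → Prop) [∀ t a b, Decidable (Q t a b)] :
    ((Nat.card {g : Fin (m + 1) → α // ∀ t, Q t (g t) (g (t + 1))} : ℕ) : ℝ) =
      Matrix.trace (List.ofFn fun t =>
        (Matrix.of fun a b => if Q t a b then (1 : ℝ) else 0)).prod := by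
  classical
  have hcollapse : ∀ x : Fin (m + 2) → α,
      (∑ a : α, if x 0 = a ∧ x (Fin.last (m + 1)) = a then
          (∏ t : Fin (m + 1),
            (Matrix.of fun a b => if Q t a b then (1 : ℝ) else 0) (x t.castSucc) (x t.succ))
          else 0)
        = if x (Fin.last (m + 1)) = x 0 ∧
            (∀ t : Fin (m + 1), Q t (x t.castSucc) (x t.succ)) then 1 else 0 := by
    intro x
    rw [Finset.sum_eq_single (x 0)
      (fun a _ ha => if_neg (fun h => ha h.1.symm))
      (fun h => absurd (Finset.mem_univ _) h)]
    have hprod : (∏ t : Fin (m + 1),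
        (Matrix.of fun a b => if Q t a b then (1 : ℝ) else 0) (x t.castSucc) (x t.succ))
          = if (∀ t : Fin (m + 1), Q t (x t.castSucc) (x t.succ)) then 1 else 0 := by
      simp only [Matrix.of_apply]
      rw [Finset.prod_boole]
      simp
    rw [hprod]
    by_cases h1 : x (Fin.last (m + 1)) = x 0 <;>
      by_cases h2 : ∀ t : Fin (m + 1), Q t (x t.castSucc) (x t.succ) <;>
      simp [h1, h2]
  have htr : Matrix.trace (List.ofFn fun t =>
        (Matrix.of fun a b => if Q t a b then (1 : ℝ) else 0)).prod
      = ∑ x : Fin (m + 2) → α,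
          if x (Fin.last (m + 1)) = x 0 ∧
              (∀ t : Fin (m + 1), Q t (x t.castSucc) (x t.succ)) then (1 : ℝ) else 0 := by
    rw [Matrix.trace]
    simp only [Matrix.diag_apply]
    simp only [prod_ofFn_apply]
    rw [Finset.sum_comm]
    exact Finset.sum_congr rfl fun x _ => hcollapse x
  rw [htr, Finset.sum_boole, ← Nat.card_congr (cyclicEquiv m Q),
    Nat.card_eq_fintype_card, Fintype.card_subtype]

lemma core_bound (c : ℕ) (Q : Fin (c + 2) → α → α → Prop) [∀ t a b, Decidable (Q t a b)] :
    ((Nat.card {g : Fin (c + 2) → α // ∀ t, Q t (g t) (g (t + 1))} : ℕ) : ℝ) ≤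
      ∏ t, frob (Matrix.of fun a b => if Q t a b then (1 : ℝ) else 0) := by
  rw [card_cyclic (c + 1) Q]
  rw [List.ofFn_succ, List.prod_cons]
  refine le_trans (trace_mul_le _ _) ?_
  rw [List.ofFn_succ, List.prod_cons]
  refine le_trans (mul_le_mul_of_nonneg_left (frob_mul_list_le _ _) (frob_nonneg _)) ?_
  rw [List.map_ofFn, List.prod_ofFn]
  rw [Fin.prod_univ_succ, Fin.prod_univ_succ]
  simp [Function.comp]

lemma sumSq_boole (Q : α → α → Prop) [∀ a b, Decidable (Q a b)] :
    sumSq (Matrix.of fun a b => if Q a b then (1 : ℝ) else 0) =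
      ((Nat.card {q : α × α // Q q.1 q.2} : ℕ) : ℝ) := by
  classical
  rw [sumSq, ← Finset.sum_product']
  have : ∀ q : α × α,
      ((Matrix.of fun a b => if Q a b then (1 : ℝ) else 0) q.1 q.2) ^ 2 =
        if Q q.1 q.2 then (1 : ℝ) else 0 := by
    intro q; simp only [Matrix.of_apply]; split <;> norm_num
  rw [Finset.sum_congr rfl (fun q _ => this q)]
  rw [Finset.univ_product_univ, Finset.sum_boole]
  rw [Nat.card_eq_fintype_card, Fintype.card_subtype]


section Graph

variable {k : ℕ} {V : Type} (G : SimpleGraph V) (P : Fin k → Finset V)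
  (n : Fin k → ℕ) (d : Fin k → Fin k → ℝ)

lemma card_filter_eq (X : V → V → Prop) [∀ u v, Decidable (X u v)] (i j : Fin k) :
    Nat.card {p : V × V // p.1 ∈ P i ∧ p.2 ∈ P j ∧ X p.1 p.2} =
      ((P i ×ˢ P j).filter fun q : V × V => X q.1 q.2).card := by
  classical
  rw [← Nat.card_eq_finsetCard]
  exact Nat.card_congr (Equiv.subtypeEquivRight fun p => by
    simp [Finset.mem_filter, Finset.mem_product, and_assoc])

lemma nonedge_card (hP : ∀ i, (P i).card = n i)
    (hsym : ∀ i j, d i j = d j i)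
    (hcnt : ∀ i j, i < j →
      (Nat.card {p : V × V // p.1 ∈ P i ∧ p.2 ∈ P j ∧ G.Adj p.1 p.2} : ℝ) =
        d i j * n i * n j)
    {i j : Fin k} (hij : i ≠ j) :
    ((Nat.card {p : V × V // p.1 ∈ P i ∧ p.2 ∈ P j ∧ ¬ G.Adj p.1 p.2} : ℕ) : ℝ) =
      (1 - d i j) * n i * n j := by
  classical
  have hswap : ∀ i j : Fin k,
      Nat.card {p : V × V // p.1 ∈ P i ∧ p.2 ∈ P j ∧ G.Adj p.1 p.2} =
        Nat.card {p : V × V // p.1 ∈ P j ∧ p.2 ∈ P i ∧ G.Adj p.1 p.2} := by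
    intro i j
    refine Nat.card_congr ⟨fun s => ⟨s.1.swap, s.2.2.1, s.2.1, s.2.2.2.symm⟩,
      fun s => ⟨s.1.swap, s.2.2.1, s.2.1, s.2.2.2.symm⟩, fun s => ?_, fun s => ?_⟩ <;>
      · apply Subtype.ext
        simp
  have hadj : (Nat.card {p : V × V // p.1 ∈ P i ∧ p.2 ∈ P j ∧ G.Adj p.1 p.2} : ℝ) =
      d i j * n i * n j := by
    rcases hij.lt_or_gt with h | h
    · exact hcnt i j h
    · rw [hswap i j, hcnt j i h, hsym i j]
      ring
  have hsplit : Nat.card {p : V × V // p.1 ∈ P i ∧ p.2 ∈ P j ∧ G.Adj p.1 p.2} +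
      Nat.card {p : V × V // p.1 ∈ P i ∧ p.2 ∈ P j ∧ ¬ G.Adj p.1 p.2} = n i * n j := by
    rw [card_filter_eq P (fun u v => G.Adj u v) i j,
      card_filter_eq P (fun u v => ¬ G.Adj u v) i j]
    have h3 := Finset.card_filter_add_card_filter_not
      (s := P i ×ˢ P j) (p := fun q : V × V => G.Adj q.1 q.2)
    rw [Finset.card_product, hP i, hP j] at h3
    convert h3
  have hsplit' : (Nat.card {p : V × V // p.1 ∈ P i ∧ p.2 ∈ P j ∧ G.Adj p.1 p.2} : ℝ) +
      (Nat.card {p : V × V // p.1 ∈ P i ∧ p.2 ∈ P j ∧ ¬ G.Adj p.1 p.2} : ℝ) =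
      (n i : ℝ) * n j := by exact_mod_cast congrArg (Nat.cast : ℕ → ℝ) hsplit
  linear_combination hsplit' - hadj

def pairEquiv (i j : Fin k) :
    {q : (Σ i : Fin k, {v : V // v ∈ P i}) × (Σ i : Fin k, {v : V // v ∈ P i}) //
        q.1.1 = i ∧ q.2.1 = j ∧ ¬ G.Adj q.1.2.1 q.2.2.1} ≃
      {p : V × V // p.1 ∈ P i ∧ p.2 ∈ P j ∧ ¬ G.Adj p.1 p.2} where
  toFun q := ⟨(q.1.1.2.1, q.1.2.2.1), by
    obtain ⟨⟨⟨i1, u⟩, ⟨j1, v⟩⟩, h1, h2, h3⟩ := q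
    dsimp only at h1 h2 h3 ⊢
    subst h1; subst h2
    exact ⟨u.2, v.2, h3⟩⟩
  invFun p := ⟨(⟨i, ⟨p.1.1, p.2.1⟩⟩, ⟨j, ⟨p.1.2, p.2.2.1⟩⟩), rfl, rfl, p.2.2.2⟩
  left_inv := by
    rintro ⟨⟨⟨i1, u, hu⟩, ⟨j1, v, hv⟩⟩, h1, h2, h3⟩
    dsimp only at h1 h2 h3
    subst h1; subst h2
    rfl
  right_inv := by
    rintro ⟨⟨u, v⟩, h⟩
    rfl


lemma cycle_helper (hP : ∀ i, (P i).card = n i)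
    (hsym : ∀ i j, d i j = d j i)
    (hbd : ∀ i j, i ≠ j → d i j ∈ Set.Icc (0 : ℝ) 1)
    (hcnt : ∀ i j, i < j →
      (Nat.card {p : V × V // p.1 ∈ P i ∧ p.2 ∈ P j ∧ G.Adj p.1 p.2} : ℝ) =
        d i j * n i * n j)
    (L m' : ℕ) (hml : L = m' + 2) (w : Fin L → Fin k) (hinj : Function.Injective w) :
    ((Nat.card {g : Fin L → V // (∀ t, g t ∈ P (w t)) ∧
        ∀ t t' : Fin L, (t' : ℕ) = ((t : ℕ) + 1) % L → ¬ G.Adj (g t) (g t')} : ℕ) : ℝ) ≤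
      (∏ t, (n (w t) : ℝ)) *
        ∏ t : Fin L, Real.sqrt (1 - d (w t) (w ⟨((t : ℕ) + 1) % L, Nat.mod_lt _ (by omega)⟩)) := by
  classical
  subst hml
  have hsucc : ∀ t : Fin (m' + 2),
      (⟨((t : ℕ) + 1) % (m' + 2), Nat.mod_lt _ (by omega)⟩ : Fin (m' + 2)) = t + 1 := by
    intro t
    apply Fin.ext
    simp [Fin.val_add, Fin.val_one]
  have hne : ∀ t : Fin (m' + 2), w t ≠ w (t + 1) := by
    intro t heq
    have hv := congrArg Fin.val (hinj heq)
    rw [Fin.val_add, Fin.val_one] at hv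
    by_cases h2 : (t : ℕ) + 1 < m' + 2
    · rw [Nat.mod_eq_of_lt h2] at hv; omega
    · have h3 : (t : ℕ) + 1 = m' + 2 := by omega
      rw [h3, Nat.mod_self] at hv
      omega
  have stepA : Nat.card {g : Fin (m' + 2) → V // (∀ t, g t ∈ P (w t)) ∧
        ∀ t t' : Fin (m' + 2), (t' : ℕ) = ((t : ℕ) + 1) % (m' + 2) → ¬ G.Adj (g t) (g t')} ≤
      Nat.card {g : Fin (m' + 2) → (Σ i : Fin k, {v : V // v ∈ P i}) //
        ∀ t, (g t).1 = w t ∧ (g (t + 1)).1 = w (t + 1) ∧ ¬ G.Adj (g t).2.1 (g (t + 1)).2.1} := by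
    apply Nat.card_le_card_of_injective
      (f := fun g => ⟨fun t => ⟨w t, ⟨g.1 t, g.2.1 t⟩⟩,
        fun t => ⟨rfl, rfl, g.2.2 t (t + 1) (by rw [← hsucc t])⟩⟩)
    intro g g' h
    apply Subtype.ext; funext t
    exact congrArg (fun z : (Σ i : Fin k, {v : V // v ∈ P i}) => z.2.1)
      (congrFun (congrArg Subtype.val h) t)
  have stepB := core_bound (α := Σ i : Fin k, {v : V // v ∈ P i}) m'
    (fun t x y => x.1 = w t ∧ y.1 = w (t + 1) ∧ ¬ G.Adj x.2.1 y.2.1)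
  have hfrob : ∀ t : Fin (m' + 2),
      frob (Matrix.of fun x y : (Σ i : Fin k, {v : V // v ∈ P i}) =>
        if x.1 = w t ∧ y.1 = w (t + 1) ∧ ¬ G.Adj x.2.1 y.2.1 then (1 : ℝ) else 0)
      = Real.sqrt ((1 - d (w t) (w (t + 1))) * n (w t) * n (w (t + 1))) := by
    intro t
    rw [frob, sumSq_boole]
    congr 1
    rw [Nat.card_congr (pairEquiv G P (w t) (w (t + 1)))]
    exact nonedge_card G P n d hP hsym hcnt (hne t)
  have hd1 : ∀ t : Fin (m' + 2), 0 ≤ 1 - d (w t) (w (t + 1)) := fun t =>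
    sub_nonneg.2 (hbd _ _ (hne t)).2
  have hsqrt : ∀ t : Fin (m' + 2),
      Real.sqrt ((1 - d (w t) (w (t + 1))) * n (w t) * n (w (t + 1))) =
        Real.sqrt (1 - d (w t) (w (t + 1))) * Real.sqrt (n (w t)) *
          Real.sqrt (n (w (t + 1))) := by
    intro t
    rw [Real.sqrt_mul (mul_nonneg (hd1 t) (Nat.cast_nonneg _)), Real.sqrt_mul (hd1 t)]
  have hmid : (∏ t : Fin (m' + 2),
        frob (Matrix.of fun x y : (Σ i : Fin k, {v : V // v ∈ P i}) =>
          if x.1 = w t ∧ y.1 = w (t + 1) ∧ ¬ G.Adj x.2.1 y.2.1 then (1 : ℝ) else 0))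
      = (∏ t : Fin (m' + 2), (n (w t) : ℝ)) *
          ∏ t : Fin (m' + 2), Real.sqrt (1 - d (w t)
            (w ⟨((t : ℕ) + 1) % (m' + 2), Nat.mod_lt _ (Nat.succ_pos _)⟩)) := by
    have e1 : ∀ t ∈ (Finset.univ : Finset (Fin (m' + 2))),
        frob (Matrix.of fun x y : (Σ i : Fin k, {v : V // v ∈ P i}) =>
          if x.1 = w t ∧ y.1 = w (t + 1) ∧ ¬ G.Adj x.2.1 y.2.1 then (1 : ℝ) else 0)
        = Real.sqrt (1 - d (w t) (w (t + 1))) * Real.sqrt (n (w t)) *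
            Real.sqrt (n (w (t + 1))) := fun t _ => by rw [hfrob t, hsqrt t]
    have hrot : (∏ t : Fin (m' + 2), Real.sqrt ((n (w (t + 1)) : ℝ))) =
        ∏ t : Fin (m' + 2), Real.sqrt ((n (w t) : ℝ)) :=
      Fintype.prod_equiv (finRotate (m' + 2))
        (fun t => Real.sqrt ((n (w (t + 1)) : ℝ)))
        (fun t => Real.sqrt ((n (w t) : ℝ)))
        (fun t => by rw [finRotate_succ_apply])
    have hpair : (∏ t : Fin (m' + 2), Real.sqrt ((n (w t) : ℝ))) *
        ∏ t : Fin (m' + 2), Real.sqrt ((n (w t) : ℝ)) =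
        ∏ t : Fin (m' + 2), (n (w t) : ℝ) := by
      rw [← Finset.prod_mul_distrib]
      exact Finset.prod_congr rfl fun t _ => Real.mul_self_sqrt (Nat.cast_nonneg _)
    rw [Finset.prod_congr rfl e1, Finset.prod_mul_distrib, Finset.prod_mul_distrib,
      hrot, mul_assoc, hpair]
    simp only [hsucc]
    ring
  exact le_trans (Nat.cast_le.2 stepA) (le_trans stepB (le_of_eq hmid))


lemma part_bound (hP : ∀ i, (P i).card = n i)
    (hsym : ∀ i j, d i j = d j i)
    (hbd : ∀ i j, i ≠ j → d i j ∈ Set.Icc (0 : ℝ) 1)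
    (hcnt : ∀ i j, i < j →
      (Nat.card {p : V × V // p.1 ∈ P i ∧ p.2 ∈ P j ∧ G.Adj p.1 p.2} : ℝ) =
        d i j * n i * n j)
    (p : OCDPart k) (hnd : p.verts.Nodup)
    (hcyc : ∀ l, p = OCDPart.cycle l → Odd l.length ∧ 3 ≤ l.length) :
    ((Nat.card {g : Fin p.verts.length → V // (∀ m, g m ∈ P (p.verts.get m)) ∧
        ∀ m m' : Fin p.verts.length, (m' : ℕ) = ((m : ℕ) + 1) % p.verts.length →
          ¬ G.Adj (g m) (g m')} : ℕ) : ℝ) ≤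
      (p.verts.map fun i => (n i : ℝ)).prod *
        (p.edges.map fun e => Real.sqrt (1 - d e.1 e.2)).prod := by
  classical
  cases p with
  | single i =>
    show ((Nat.card {g : Fin 1 → V // (∀ m : Fin 1, g m ∈ P (([i] : List (Fin k)).get m)) ∧
        ∀ m m' : Fin 1, (m' : ℕ) = ((m : ℕ) + 1) % 1 → ¬ G.Adj (g m) (g m')} : ℕ) : ℝ) ≤
      (([i] : List (Fin k)).map fun i => (n i : ℝ)).prod *
        (([] : List (Fin k × Fin k)).map fun e => Real.sqrt (1 - d e.1 e.2)).prod
    have hle : Nat.card {g : Fin 1 → V // (∀ m : Fin 1, g m ∈ P (([i] : List (Fin k)).get m)) ∧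
        ∀ m m' : Fin 1, (m' : ℕ) = ((m : ℕ) + 1) % 1 → ¬ G.Adj (g m) (g m')} ≤
        Nat.card {v : V // v ∈ P i} := by
      apply Nat.card_le_card_of_injective (f := fun g => ⟨g.1 0, g.2.1 0⟩)
      intro g g' h
      apply Subtype.ext; funext m
      rw [Subsingleton.elim m (0 : Fin 1)]
      exact congrArg Subtype.val h
    refine le_trans (Nat.cast_le.2 hle) ?_
    rw [Nat.card_eq_finsetCard, hP i]
    simp
  | double i j =>
    have hij : i ≠ j := by simpa [OCDPart.verts] using hnd
    show ((Nat.card {g : Fin 2 → V // (∀ m : Fin 2, g m ∈ P (([i, j] : List (Fin k)).get m)) ∧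
        ∀ m m' : Fin 2, (m' : ℕ) = ((m : ℕ) + 1) % 2 → ¬ G.Adj (g m) (g m')} : ℕ) : ℝ) ≤
      (([i, j] : List (Fin k)).map fun i => (n i : ℝ)).prod *
        (([(i, j), (i, j)] : List (Fin k × Fin k)).map fun e =>
          Real.sqrt (1 - d e.1 e.2)).prod
    haveI : Finite {p : V × V // p.1 ∈ P i ∧ p.2 ∈ P j ∧ ¬ G.Adj p.1 p.2} := by
      apply Finite.of_injective
        (f := fun s => ((⟨s.1.1, s.2.1⟩, ⟨s.1.2, s.2.2.1⟩) : ↥(P i) × ↥(P j)))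
      intro a b h
      apply Subtype.ext
      exact Prod.ext (congrArg Subtype.val (congrArg Prod.fst h))
        (congrArg Subtype.val (congrArg Prod.snd h))
    have hle : Nat.card {g : Fin 2 → V // (∀ m : Fin 2, g m ∈ P (([i, j] : List (Fin k)).get m)) ∧
        ∀ m m' : Fin 2, (m' : ℕ) = ((m : ℕ) + 1) % 2 → ¬ G.Adj (g m) (g m')} ≤
        Nat.card {p : V × V // p.1 ∈ P i ∧ p.2 ∈ P j ∧ ¬ G.Adj p.1 p.2} := by
      apply Nat.card_le_card_of_injective
        (f := fun g => ⟨(g.1 0, g.1 1), g.2.1 0, g.2.1 1, g.2.2 0 1 (by norm_num)⟩)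
      intro g g' h
      apply Subtype.ext; funext m
      have hv := congrArg Subtype.val h
      fin_cases m
      · exact congrArg Prod.fst hv
      · exact congrArg Prod.snd hv
    refine le_trans (Nat.cast_le.2 hle) ?_
    rw [nonedge_card G P n d hP hsym hcnt hij]
    refine le_of_eq ?_
    have h1 : (0 : ℝ) ≤ 1 - d i j := sub_nonneg.2 (hbd i j hij).2
    simp only [List.map_cons, List.map_nil, List.prod_cons, List.prod_nil, mul_one]
    rw [Real.mul_self_sqrt h1]
    ring
  | cycle l =>
    have h3 : 3 ≤ l.length := (hcyc l rfl).2
    have hndl : l.Nodup := hnd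
    show ((Nat.card {g : Fin l.length → V // (∀ m : Fin l.length, g m ∈ P (l.get m)) ∧
        ∀ m m' : Fin l.length, (m' : ℕ) = ((m : ℕ) + 1) % l.length →
          ¬ G.Adj (g m) (g m')} : ℕ) : ℝ) ≤
      (l.map fun i => (n i : ℝ)).prod *
        ((l.zip (l.rotate 1)).map fun e => Real.sqrt (1 - d e.1 e.2)).prod
    have key := cycle_helper G P n d hP hsym hbd hcnt l.length (l.length - 2)
      (by omega) l.get (List.nodup_iff_injective_get.1 hndl)
    refine le_trans key (le_of_eq ?_)
    congr 1
    · rw [← List.ofFn_getElem_eq_map, List.prod_ofFn]; rfl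
    · have hzip : l.zip (l.rotate 1) = List.ofFn (fun t : Fin l.length =>
          (l.get t, l.get ⟨((t : ℕ) + 1) % l.length, Nat.mod_lt _ (by omega)⟩)) := by
        apply List.ext_getElem
        · simp [List.length_zip, List.length_rotate]
        · intro idx h1 h2
          simp [List.getElem_zip, List.getElem_ofFn, List.getElem_rotate,
            List.get_eq_getElem]
      rw [hzip, List.map_ofFn, List.prod_ofFn]
      rfl

end Graph

lemma prod_map_eq_prod_get {A M : Type*} [CommMonoid M] (L : List A) (h : A → M) :
    (L.map h).prod = ∏ a : Fin L.length, h (L.get a) := by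
  conv_lhs => rw [← List.ofFn_get L]
  rw [List.map_ofFn, List.prod_ofFn]
  rfl

lemma prod_flatMap_map {A B M : Type*} [CommMonoid M] (L : List A) (g : A → List B)
    (f : B → M) :
    ((L.flatMap g).map f).prod = ∏ a : Fin L.length, ((g (L.get a)).map f).prod := by
  rw [List.map_flatMap, List.flatMap_def, List.prod_flatten, List.map_map]
  exact prod_map_eq_prod_get L _

lemma nodup_of_mem_flatMap {k : ℕ} :
    ∀ (H : List (OCDPart k)), (H.flatMap OCDPart.verts).Nodup →
      ∀ p ∈ H, p.verts.Nodup
  | [], _, p, hp => absurd hp List.not_mem_nil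
  | q :: H, hnd, p, hp => by
    rw [List.flatMap_cons, List.nodup_append] at hnd
    rcases List.mem_cons.1 hp with h | h
    · subst h; exact hnd.1
    · exact nodup_of_mem_flatMap H hnd.2.1 p h

end ITUB

set_option maxHeartbeats 1000000 in
/-- Quantitative upper bound (Proposition 2.8): for every odd cycle
decomposition `H` of `K_k`, the number of independent transversals of a
`k`-partite graph with part sizes `n i` and pairwise densities `d i j` is at
most `(∏ n i)·∏_{F∈H}∏_{(i,j)∈E(F)} √(1-d i j) + C·(∏ n i)/min n i`,
where `C` depends only on `k`. -/
theorem independent_transversals_upper_bound (k : ℕ) (hk : 2 ≤ k) :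
    ∃ C : ℝ, ∀ (V : Type) (G : SimpleGraph V)
      (P : Fin k → Finset V) (n : Fin k → ℕ) (d : Fin k → Fin k → ℝ),
      (∀ i, (P i).card = n i) →
      (∀ i, 0 < n i) →
      (∀ i j, i ≠ j → Disjoint (P i) (P j)) →
      (∀ i, ∀ u ∈ P i, ∀ v ∈ P i, ¬ G.Adj u v) →
      (∀ i j, d i j = d j i) →
      (∀ i j, i ≠ j → d i j ∈ Set.Icc (0 : ℝ) 1) →
      (∀ i j, i < j →
        (Nat.card {p : V × V // p.1 ∈ P i ∧ p.2 ∈ P j ∧ G.Adj p.1 p.2} : ℝ)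
          = d i j * n i * n j) →
      ∀ H : List (OCDPart k), IsOCD H →
      (Nat.card {t : Fin k → V //
          (∀ i, t i ∈ P i) ∧ ∀ i j, i ≠ j → ¬ G.Adj (t i) (t j)} : ℝ)
        ≤ (∏ i, (n i : ℝ))
            * ((H.flatMap OCDPart.edges).map
                (fun e => Real.sqrt (1 - d e.1 e.2))).prod
          + C * (∏ i, (n i : ℝ))
              / (Finset.univ.inf' ⟨⟨0, by omega⟩, Finset.mem_univ _⟩ n : ℕ) := by
  classical
  refine ⟨0, ?_⟩
  intro V G P n d hP hpos hdisj hindep hsym hbd hcnt H hOCD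
  obtain ⟨hnd, hcov, hcyc⟩ := hOCD
  haveI hSfin : Finite {t : Fin k → V //
      (∀ i, t i ∈ P i) ∧ ∀ i j, i ≠ j → ¬ G.Adj (t i) (t j)} :=
    Finite.of_injective
      (fun t => (fun i => (⟨t.1 i, t.2.1 i⟩ : {v : V // v ∈ P i})))
      (fun t t' h => Subtype.ext (funext fun i => congrArg Subtype.val (congrFun h i)))
  haveI hTfin : ∀ a : Fin H.length, Finite
      {g : Fin (H.get a).verts.length → V //
        (∀ m, g m ∈ P ((H.get a).verts.get m)) ∧
        ∀ m m' : Fin (H.get a).verts.length,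
          (m' : ℕ) = ((m : ℕ) + 1) % (H.get a).verts.length → ¬ G.Adj (g m) (g m')} :=
    fun a => Finite.of_injective
      (fun g => (fun m => (⟨g.1 m, g.2.1 m⟩ : {v : V // v ∈ P ((H.get a).verts.get m)})))
      (fun g g' h => Subtype.ext (funext fun m => congrArg Subtype.val (congrFun h m)))
  have hinj : Nat.card {t : Fin k → V //
      (∀ i, t i ∈ P i) ∧ ∀ i j, i ≠ j → ¬ G.Adj (t i) (t j)} ≤
      Nat.card (∀ a : Fin H.length,
        {g : Fin (H.get a).verts.length → V //
          (∀ m, g m ∈ P ((H.get a).verts.get m)) ∧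
          ∀ m m' : Fin (H.get a).verts.length,
            (m' : ℕ) = ((m : ℕ) + 1) % (H.get a).verts.length →
              ¬ G.Adj (g m) (g m')}) := by
    apply Nat.card_le_card_of_injective (f := fun t => fun a =>
      ⟨fun m => t.1 ((H.get a).verts.get m), fun m => t.2.1 _, fun m m' _ => by
        show ¬ G.Adj (t.1 ((H.get a).verts.get m)) (t.1 ((H.get a).verts.get m'))
        by_cases hmm : (H.get a).verts.get m = (H.get a).verts.get m'
        · rw [hmm]; exact G.irrefl
        · exact t.2.2 _ _ hmm⟩)
    intro t t' h
    apply Subtype.ext; funext i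
    obtain ⟨p, hpH, hip⟩ := List.mem_flatMap.1 (hcov i)
    obtain ⟨a, ha⟩ := List.mem_iff_get.1 hpH
    obtain ⟨m, hm⟩ := List.mem_iff_get.1 (show i ∈ (H.get a).verts by rw [ha]; exact hip)
    have h2 := congrArg (fun F => (F a).1 m) h
    dsimp at h2
    simp only [List.get_eq_getElem] at hm
    rw [hm] at h2
    exact h2
  have hbound : ∀ a : Fin H.length,
      ((Nat.card {g : Fin (H.get a).verts.length → V //
          (∀ m, g m ∈ P ((H.get a).verts.get m)) ∧
          ∀ m m' : Fin (H.get a).verts.length,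
            (m' : ℕ) = ((m : ℕ) + 1) % (H.get a).verts.length →
              ¬ G.Adj (g m) (g m')} : ℕ) : ℝ) ≤
        ((H.get a).verts.map fun i => (n i : ℝ)).prod *
          ((H.get a).edges.map fun e => Real.sqrt (1 - d e.1 e.2)).prod := fun a =>
    ITUB.part_bound G P n d hP hsym hbd hcnt (H.get a)
      (ITUB.nodup_of_mem_flatMap H hnd _ (List.get_mem H a))
      (fun l hl => hcyc _ (List.get_mem H a) l hl)
  have main : (Nat.card {t : Fin k → V //
      (∀ i, t i ∈ P i) ∧ ∀ i j, i ≠ j → ¬ G.Adj (t i) (t j)} : ℝ) ≤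
      (∏ i, (n i : ℝ)) *
        ((H.flatMap OCDPart.edges).map (fun e => Real.sqrt (1 - d e.1 e.2))).prod := by
    have h1 : ∏ a : Fin H.length, ((H.get a).verts.map fun i => (n i : ℝ)).prod
        = ∏ i : Fin k, (n i : ℝ) := by
      rw [← ITUB.prod_flatMap_map H OCDPart.verts (fun i => (n i : ℝ)),
        ← List.prod_toFinset _ hnd,
        show (H.flatMap OCDPart.verts).toFinset = (Finset.univ : Finset (Fin k)) from
          Finset.eq_univ_iff_forall.2 fun i => List.mem_toFinset.2 (hcov i)]
    have h2 : ∏ a : Fin H.length,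
          ((H.get a).edges.map fun e => Real.sqrt (1 - d e.1 e.2)).prod
        = ((H.flatMap OCDPart.edges).map (fun e => Real.sqrt (1 - d e.1 e.2))).prod :=
      (ITUB.prod_flatMap_map H OCDPart.edges _).symm
    calc (Nat.card {t : Fin k → V //
        (∀ i, t i ∈ P i) ∧ ∀ i j, i ≠ j → ¬ G.Adj (t i) (t j)} : ℝ)
        ≤ (Nat.card (∀ a : Fin H.length,
            {g : Fin (H.get a).verts.length → V //
              (∀ m, g m ∈ P ((H.get a).verts.get m)) ∧
              ∀ m m' : Fin (H.get a).verts.length,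
                (m' : ℕ) = ((m : ℕ) + 1) % (H.get a).verts.length →
                  ¬ G.Adj (g m) (g m')}) : ℝ) := Nat.cast_le.2 hinj
      _ = ∏ a : Fin H.length, ((Nat.card
            {g : Fin (H.get a).verts.length → V //
              (∀ m, g m ∈ P ((H.get a).verts.get m)) ∧
              ∀ m m' : Fin (H.get a).verts.length,
                (m' : ℕ) = ((m : ℕ) + 1) % (H.get a).verts.length →
                  ¬ G.Adj (g m) (g m')} : ℕ) : ℝ) := by
            rw [Nat.card_pi]; push_cast; rfl
      _ ≤ ∏ a : Fin H.length,
            (((H.get a).verts.map fun i => (n i : ℝ)).prod *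
              ((H.get a).edges.map fun e => Real.sqrt (1 - d e.1 e.2)).prod) :=
            Finset.prod_le_prod (fun a _ => Nat.cast_nonneg _) (fun a _ => hbound a)
      _ = (∏ a : Fin H.length, ((H.get a).verts.map fun i => (n i : ℝ)).prod) *
            ∏ a : Fin H.length,
              ((H.get a).edges.map fun e => Real.sqrt (1 - d e.1 e.2)).prod :=
            Finset.prod_mul_distrib
      _ = (∏ i, (n i : ℝ)) *
            ((H.flatMap OCDPart.edges).map (fun e => Real.sqrt (1 - d e.1 e.2))).prod := by
            rw [h1, h2]
  refine le_trans main (le_of_eq ?_)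
  rw [zero_mul, zero_div, add_zero]
end
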